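/- Let N and L be positive integers, let lev : Fin N → {0, 1, …, L} be a level function, and for a real N×N matrix K and levels i, j ∈ {0,…,L} let K_{(i,j)} denote the sub-block of K consisting of the rows r with lev(r) = i and columns c with lev(c) = j. Suppose there is c ≥ 0 such that ‖K_{(i,j)}‖₂ ≤ c·2^{−(i+j)} for all i, j. For m ∈ ℕ define the truncated matrix K^m by (K^m)_{rc} = K_{rc} if lev(r) + lev(c) ≤ m and (K^m)_{rc} = 0 otherwise. Then ‖K − K^m‖₂ ≤ c·(L+1)·2^{−m}. -/

import Mathlib

/-!
The tail `K - K^m` is the sum of the zero-padded level blocks `K_{(i,j)}` with `i, j ≤ L` and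
`i + j > m`. Zero-padding a block multiplies it on both sides by coordinate inclusions, which are
partial isometries, so it does not increase the spectral norm. By the triangle inequality the error
is at most `c ∑ 2^{-(i+j)}` over these pairs, and for each of the `L + 1` row levels `i` the sum
over `j` is a geometric tail bounded by `2^{-m}`.
-/

open Finset

/-- The spectral norm (ℓ²-operator norm) of a real rectangular matrix. -/
noncomputable def l2OpNorm {m n : Type*} [Fintype m] [Fintype n] [DecidableEq n]
    (M : Matrix m n ℝ) : ℝ :=
  ‖LinearMap.toContinuousLinearMap (Matrix.toEuclideanLin M)‖

/-- The sub-block of `K` with rows of level `i` and columns of level `j`. -/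
def levBlock {N : ℕ} (lev : Fin N → ℕ) (K : Matrix (Fin N) (Fin N) ℝ) (i j : ℕ) :
    Matrix {r : Fin N // lev r = i} {c : Fin N // lev c = j} ℝ :=
  Matrix.of fun r c => K r.1 c.1

open scoped Matrix.Norms.L2Operator

theorem l2OpNorm_eq_norm {m n : Type*} [Fintype m] [Fintype n] [DecidableEq n]
    (M : Matrix m n ℝ) : l2OpNorm M = ‖M‖ :=
  rfl

def hyperbolicTail (L m : ℕ) : Finset (ℕ × ℕ) :=
  (range (L + 1) ×ˢ range (L + 1)).filter fun p => m < p.1 + p.2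

@[simp]
theorem mem_hyperbolicTail {L m : ℕ} {p : ℕ × ℕ} :
    p ∈ hyperbolicTail L m ↔ p.1 ≤ L ∧ p.2 ≤ L ∧ m < p.1 + p.2 := by
  simp [hyperbolicTail, and_assoc]

theorem sum_ite_lt_inv_two_pow_le (m : ℕ) (s : Finset ℕ) :
    ∑ t ∈ s, (if m < t then ((2 : ℝ) ^ t)⁻¹ else 0) ≤ ((2 : ℝ) ^ m)⁻¹ := by
  have hsum : Summable fun t : ℕ => if m + 1 ≤ t then (2⁻¹ : ℝ) ^ t else 0 := by
    simpa only [← Set.piecewise_eq_indicator, one_div]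
      using! summable_geometric_two.indicator {t | m + 1 ≤ t}
  calc ∑ t ∈ s, (if m < t then ((2 : ℝ) ^ t)⁻¹ else 0)
      = ∑ t ∈ s, (if m + 1 ≤ t then (2⁻¹ : ℝ) ^ t else 0) := by simp
    _ ≤ ∑' t, (if m + 1 ≤ t then (2⁻¹ : ℝ) ^ t else 0) :=
        hsum.sum_le_tsum s fun t _ => by positivity
    _ = ((2 : ℝ) ^ m)⁻¹ := by
        rw [tsum_geometric_inv_two_ge, pow_succ, inv_pow]
        ring

theorem sum_hyperbolicTail_inv_two_pow_le (L m : ℕ) :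
    ∑ p ∈ hyperbolicTail L m, ((2 : ℝ) ^ (p.1 + p.2))⁻¹ ≤ (L + 1) * ((2 : ℝ) ^ m)⁻¹ := by
  rw [hyperbolicTail, sum_filter, sum_product]
  calc _ ≤ ∑ i ∈ range (L + 1), ((2 : ℝ) ^ m)⁻¹ := by
        gcongr with i
        simpa using sum_ite_lt_inv_two_pow_le m ((range (L + 1)).map (addLeftEmbedding i))
    _ = (L + 1) * ((2 : ℝ) ^ m)⁻¹ := by simp

theorem Fintype.sum_ite_eq_val {ι M : Type*} [Fintype ι] [DecidableEq ι] [AddCommMonoid M]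
    (p : ι → Prop) [DecidablePred p] (a : ι) (f : {x // p x} → M) :
    ∑ j : {x // p x}, (if a = j then f j else 0) = if h : p a then f ⟨a, h⟩ else 0 := by
  split_ifs with h
  · simp_rw [show ∀ j : {x // p x}, a = j ↔ ⟨a, h⟩ = j from
      fun j => (Subtype.ext_iff (a1 := ⟨a, h⟩) (a2 := j)).symm]
    simp
  · exact Finset.sum_eq_zero fun j _ => if_neg fun (hj : a = j) => h (hj ▸ j.2)

namespace Matrix

theorem sub_of_ite_le_eq_sum_hyperbolicTail {n R : Type*} [AddCommGroup R] {L : ℕ}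
    (lev : n → ℕ) (hlev : ∀ r, lev r ≤ L) (M : Matrix n n R) (m : ℕ) :
    M - (of fun r s => if lev r + lev s ≤ m then M r s else 0) =
      ∑ p ∈ hyperbolicTail L m, of fun r s => if lev r = p.1 ∧ lev s = p.2 then M r s else 0 := by
  ext r s
  have hpair : ∀ p : ℕ × ℕ, (lev r = p.1 ∧ lev s = p.2) ↔ (lev r, lev s) = p := fun p => by
    rw [Prod.ext_iff]
  simp only [sub_apply, of_apply, sum_apply, hpair, sum_ite_eq]
  by_cases h : m < lev r + lev s
  · simp [h, not_le.2 h, hlev r, hlev s]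
  · simp [h, not_lt.1 h]

variable {𝕜 m n ι : Type*} [RCLike 𝕜] [Fintype m] [DecidableEq m] [Fintype n] [DecidableEq n]
  [Fintype ι] [DecidableEq ι]

theorem l2_opNorm_one_submatrix_id_left_le {e : ι → m} (he : Function.Injective e) :
    ‖(1 : Matrix m m 𝕜).submatrix id e‖ ≤ 1 := by
  have hsq : ‖(1 : Matrix m m 𝕜).submatrix id e‖ * ‖(1 : Matrix m m 𝕜).submatrix id e‖ ≤ 1 := by
    rw [← l2_opNorm_conjTranspose_mul_self, conjTranspose_submatrix,
      ← submatrix_mul _ _ _ _ _ Function.bijective_id, conjTranspose_one, Matrix.mul_one,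
      submatrix_one e he, ← diagonal_one, l2_opNorm_diagonal]
    exact pi_norm_le_iff_of_nonneg zero_le_one |>.2 fun _ => norm_one.le
  nlinarith [norm_nonneg ((1 : Matrix m m 𝕜).submatrix id e)]

theorem l2_opNorm_one_submatrix_id_right_le {e : ι → m} (he : Function.Injective e) :
    ‖(1 : Matrix m m 𝕜).submatrix e id‖ ≤ 1 := by
  rw [← conjTranspose_one, ← conjTranspose_submatrix, l2_opNorm_conjTranspose]
  exact l2_opNorm_one_submatrix_id_left_le he

variable (p : m → Prop) (q : n → Prop) [DecidablePred p] [DecidablePred q] (M : Matrix m n 𝕜)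

theorem one_submatrix_mul_submatrix_mul_one_submatrix :
    (1 : Matrix m m 𝕜).submatrix id (Subtype.val : {r // p r} → m) *
        M.submatrix (Subtype.val : {r // p r} → m) (Subtype.val : {s // q s} → n) *
        (1 : Matrix n n 𝕜).submatrix (Subtype.val : {s // q s} → n) id =
      of fun r s => if p r ∧ q s then M r s else 0 := by
  ext r s
  simp only [mul_apply, submatrix_apply, one_apply, id_eq, ite_mul, one_mul, zero_mul, mul_ite,
    mul_one, mul_zero, @eq_comm _ _ s, Fintype.sum_ite_eq_val, dite_eq_ite, ite_and, of_apply]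
  split_ifs <;> rfl

theorem l2_opNorm_of_ite_le_submatrix :
    ‖(of fun r s => if p r ∧ q s then M r s else 0 : Matrix m n 𝕜)‖ ≤
      ‖M.submatrix (Subtype.val : {r // p r} → m) (Subtype.val : {s // q s} → n)‖ := by
  rw [← one_submatrix_mul_submatrix_mul_one_submatrix]
  set B := M.submatrix (Subtype.val : {r // p r} → m) (Subtype.val : {s // q s} → n)
  calc _ ≤ ‖(1 : Matrix m m 𝕜).submatrix id (Subtype.val : {r // p r} → m)‖ * ‖B‖ *
          ‖(1 : Matrix n n 𝕜).submatrix (Subtype.val : {s // q s} → n) id‖ :=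
        (l2_opNorm_mul _ _).trans (by gcongr; exact l2_opNorm_mul _ _)
    _ ≤ 1 * ‖B‖ * 1 := by
        gcongr
        · exact l2_opNorm_one_submatrix_id_left_le Subtype.val_injective
        · exact l2_opNorm_one_submatrix_id_right_le Subtype.val_injective
    _ = ‖B‖ := by ring

end Matrix

theorem hyperbolic_cross_truncation_general
    {N L : ℕ}
    (lev : Fin N → ℕ) (hlev : ∀ r, lev r ≤ L)
    (K : Matrix (Fin N) (Fin N) ℝ) (c : ℝ) (hc : 0 ≤ c)
    (hblock : ∀ i j, i ≤ L → j ≤ L →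
      l2OpNorm (levBlock lev K i j) ≤ c * ((2 : ℝ) ^ (i + j))⁻¹)
    (m : ℕ) :
    l2OpNorm (K - Matrix.of fun r s => if lev r + lev s ≤ m then K r s else 0) ≤
      c * (L + 1) * ((2 : ℝ) ^ m)⁻¹ := by
  rw [l2OpNorm_eq_norm, Matrix.sub_of_ite_le_eq_sum_hyperbolicTail lev hlev]
  calc _ ≤ ∑ p ∈ hyperbolicTail L m, c * ((2 : ℝ) ^ (p.1 + p.2))⁻¹ := by
        refine norm_sum_le_of_le _ fun p hp => ?_
        rw [mem_hyperbolicTail] at hp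
        exact (Matrix.l2_opNorm_of_ite_le_submatrix _ _ K).trans (hblock _ _ hp.1 hp.2.1)
    _ ≤ c * ((L + 1) * ((2 : ℝ) ^ m)⁻¹) := by
        rw [← mul_sum]
        exact mul_le_mul_of_nonneg_left (sum_hyperbolicTail_inv_two_pow_le L m) hc
    _ = c * (L + 1) * ((2 : ℝ) ^ m)⁻¹ := (mul_assoc _ _ _).symm

/-- Hyperbolic-cross truncation estimate: if the level blocks of `K` decay like
`‖K_{(i,j)}‖₂ ≤ c·2^{-(i+j)}`, then dropping all entries with `lev r + lev c > m` incurs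
a spectral-norm error of at most `c·(L+1)·2^{-m}`. -/
theorem hyperbolic_cross_truncation
    {N L : ℕ} (hN : 0 < N) (hL : 0 < L)
    (lev : Fin N → ℕ) (hlev : ∀ r, lev r ≤ L)
    (K : Matrix (Fin N) (Fin N) ℝ) (c : ℝ) (hc : 0 ≤ c)
    (hblock : ∀ i j, i ≤ L → j ≤ L →
      l2OpNorm (levBlock lev K i j) ≤ c * ((2 : ℝ) ^ (i + j))⁻¹)
    (m : ℕ) :
    l2OpNorm (K - Matrix.of fun r s => if lev r + lev s ≤ m then K r s else 0) ≤
      c * (L + 1) * ((2 : ℝ) ^ m)⁻¹ :=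
  hyperbolic_cross_truncation_general lev hlev K c hc hblock m
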